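/- Quantitative mass extraction: let f ∈ L^p(R^d) with ‖f‖_p = 1 and define inductively r⁰ = f, fʲ = r^{j-1}·1_{τ^j}·1_{{|f| < 2^j|τ^j|^{-1/p}}}, r^j = r^{j-1} − f^j, where at each step τ^j is a dyadic cube maximizing ‖r^{j-1}·1_τ·1_{{|f|<2^j|τ|^{-1/p}}}‖_p. Then for every j ≥ 1, A_j := sup_τ ‖r^{2j}·1_τ·1_{{|f|<2^j|τ|^{-1/p}}}‖_{L^p} satisfies A_j ≤ j^{-1/p}. -/

import Mathlib

open MeasureTheory
open scoped ENNReal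

/-- The dyadic cube of side length `2^{-k}` with corner `m · 2^{-k}`. -/
def dyadicCube (d : ℕ) (k : ℤ) (m : Fin d → ℤ) : Set (EuclideanSpace ℝ (Fin d)) :=
  {ξ | ∀ i, (m i : ℝ) * (2 : ℝ) ^ (-k : ℤ) ≤ ξ i ∧ ξ i ≤ ((m i : ℝ) + 1) * (2 : ℝ) ^ (-k : ℤ)}

-- The chip of `g` on the dyadic cube `(k, m)` with truncation of `f` at height
-- `2^j |τ|^{-1/p}` (for `‖f‖_p = 1`, since `|τ|^{-1/p} = 2^{kd/p}`).
open Classical in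
noncomputable def chip (d : ℕ) (p : ℝ) (f g : EuclideanSpace ℝ (Fin d) → ℂ)
    (j : ℕ) (k : ℤ) (m : Fin d → ℤ) : EuclideanSpace ℝ (Fin d) → ℂ :=
  fun ξ => if ξ ∈ dyadicCube d k m ∧
      ‖f ξ‖ < 2 ^ j * (2 : ℝ) ^ ((k : ℝ) * d / p) then g ξ else 0

/-! Writing `S i` for the set cut out at step `i + 1` (`extractedSet`), the remainders are
`r n = 1_{⋂ i < n, (S i)ᶜ} f`, so the extracted chips are `1_{disjointed S i} f`: disjointly
supported pieces of `f`, whose `p`-th power masses add up to at most `‖f‖_p ^ p = 1`. For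
`j ≤ i < 2j` the level-`j` chip of `r (2j)` on a cube is pointwise dominated by the level-`(i + 1)`
chip of `r i` on the same cube, so by maximality `A_j` is at most the mass of the `i`-th extracted
chip. Summing over these `j` indices gives `j A_j ^ p ≤ 1`. -/

open Set

section Remainders

variable {α M : Type*}

theorem eq_indicator_biInter_compl_of_succ [Zero M] {r : ℕ → α → M} (s : ℕ → Set α)
    (hrec : ∀ n, r (n + 1) = (s n)ᶜ.indicator (r n)) (n : ℕ) :
    r n = (⋂ i < n, (s i)ᶜ).indicator (r 0) := by
  induction n with
  | zero => simp
  | succ n ih => rw [hrec, ih, indicator_indicator, biInter_lt_succ, inter_comm]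

end Remainders

section LpMass

variable {α E : Type*} [MeasurableSpace α] {μ : Measure α} [NormedAddCommGroup E]

theorem sum_lintegral_le_lintegral_sum {ι : Type*} (s : Finset ι) (g : ι → α → ℝ≥0∞) :
    ∑ i ∈ s, ∫⁻ x, g i x ∂μ ≤ ∫⁻ x, ∑ i ∈ s, g i x ∂μ := by
  classical
  induction s using Finset.induction_on with
  | empty => simp
  | insert a s ha ih =>
    simp only [Finset.sum_insert ha]
    exact (add_le_add le_rfl ih).trans (le_lintegral_add _ _)

theorem sum_eLpNorm_indicator_rpow_le {p : NNReal} (hp : p ≠ 0) (f : α → E) {ι : Type*}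
    {s : ι → Set α} (I : Finset ι) (hs : (I : Set ι).PairwiseDisjoint s) :
    ∑ i ∈ I, eLpNorm ((s i).indicator f) p μ ^ (p : ℝ) ≤ eLpNorm f p μ ^ (p : ℝ) := by
  have hp' : (0 : ℝ) < p := by positivity
  have hpow (t : Set α) :
      (fun x ↦ ‖t.indicator f x‖ₑ ^ (p : ℝ)) = t.indicator (fun x ↦ ‖f x‖ₑ ^ (p : ℝ)) :=
    (indicator_comp_of_zero (g := fun y : E ↦ ‖y‖ₑ ^ (p : ℝ))
      (by simp [ENNReal.zero_rpow_of_pos hp'])).symm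
  simp only [eLpNorm_nnreal_pow_eq_lintegral hp, hpow]
  calc ∑ i ∈ I, ∫⁻ x, (s i).indicator (fun x ↦ ‖f x‖ₑ ^ (p : ℝ)) x ∂μ
      ≤ ∫⁻ x, ∑ i ∈ I, (s i).indicator (fun x ↦ ‖f x‖ₑ ^ (p : ℝ)) x ∂μ :=
        sum_lintegral_le_lintegral_sum _ _
    _ = ∫⁻ x, (⋃ i ∈ I, s i).indicator (fun x ↦ ‖f x‖ₑ ^ (p : ℝ)) x ∂μ := by
        simp only [Finset.indicator_biUnion_apply I s hs]
    _ ≤ ∫⁻ x, ‖f x‖ₑ ^ (p : ℝ) ∂μ := lintegral_mono (indicator_le_self _ _)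

end LpMass

theorem ENNReal.le_ofReal_rpow_neg_inv_of_mul_rpow_le_one {a : ℝ≥0∞} {p : ℝ} (hp : 0 < p)
    {n : ℕ} (hn : n ≠ 0) (h : n * a ^ p ≤ 1) : a ≤ ENNReal.ofReal ((n : ℝ) ^ (-(1 / p))) := by
  have hn' : (0 : ℝ) < n := by positivity
  rw [← ENNReal.ofReal_rpow_of_pos hn', ENNReal.ofReal_natCast, ENNReal.rpow_neg, one_div,
    ← ENNReal.inv_rpow, ENNReal.le_rpow_inv_iff hp, ENNReal.le_inv_iff_mul_le, mul_comm]
  exact h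

def chipSet (d : ℕ) (p : ℝ) (f : EuclideanSpace ℝ (Fin d) → ℂ) (j : ℕ) (k : ℤ)
    (m : Fin d → ℤ) : Set (EuclideanSpace ℝ (Fin d)) :=
  dyadicCube d k m ∩ {ξ | ‖f ξ‖ < 2 ^ j * (2 : ℝ) ^ ((k : ℝ) * d / p)}

def extractedSet (d : ℕ) (p : ℝ) (f : EuclideanSpace ℝ (Fin d) → ℂ) (kc : ℕ → ℤ)
    (mc : ℕ → Fin d → ℤ) (n : ℕ) : Set (EuclideanSpace ℝ (Fin d)) :=
  chipSet d p f (n + 1) (kc (n + 1)) (mc (n + 1))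

section Chips

variable {d : ℕ} {p : ℝ} {f : EuclideanSpace ℝ (Fin d) → ℂ}
  {r : ℕ → EuclideanSpace ℝ (Fin d) → ℂ} {kc : ℕ → ℤ} {mc : ℕ → Fin d → ℤ}

theorem chip_eq_indicator (g : EuclideanSpace ℝ (Fin d) → ℂ) (j : ℕ) (k : ℤ) (m : Fin d → ℤ) :
    chip d p f g j k m = (chipSet d p f j k m).indicator g := by
  classical
  ext ξ
  simp only [chip, chipSet, indicator_apply, mem_inter_iff, mem_ofPred_eq]

theorem chipSet_mono (k : ℤ) (m : Fin d → ℤ) : Monotone fun j ↦ chipSet d p f j k m := by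
  intro j j' hj ξ ⟨hcube, hξ⟩
  refine ⟨hcube, show ‖f ξ‖ < _ from hξ.trans_le ?_⟩
  gcongr
  norm_num

theorem remainder_eq_indicator (hr0 : r 0 = f)
    (hrec : ∀ n, r (n + 1) = fun ξ ↦ r n ξ - chip d p f (r n) (n + 1) (kc (n + 1)) (mc (n + 1)) ξ)
    (n : ℕ) : r n = (⋂ i < n, (extractedSet d p f kc mc i)ᶜ).indicator f := by
  have hstep (n : ℕ) : r (n + 1) = (extractedSet d p f kc mc n)ᶜ.indicator (r n) := by
    rw [hrec, indicator_compl, chip_eq_indicator]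
    rfl
  rw [eq_indicator_biInter_compl_of_succ _ hstep n, hr0]

theorem extracted_chip_eq_indicator_disjointed (hr0 : r 0 = f)
    (hrec : ∀ n, r (n + 1) = fun ξ ↦ r n ξ - chip d p f (r n) (n + 1) (kc (n + 1)) (mc (n + 1)) ξ)
    (n : ℕ) : chip d p f (r n) (n + 1) (kc (n + 1)) (mc (n + 1)) =
      (disjointed (extractedSet d p f kc mc) n).indicator f := by
  rw [chip_eq_indicator, remainder_eq_indicator hr0 hrec, indicator_indicator,
    disjointed_eq_inter_compl]
  rfl

theorem norm_chip_remainder_le (hr0 : r 0 = f)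
    (hrec : ∀ n, r (n + 1) = fun ξ ↦ r n ξ - chip d p f (r n) (n + 1) (kc (n + 1)) (mc (n + 1)) ξ)
    {n n' j j' : ℕ} (hn : n ≤ n') (hj : j ≤ j') (k : ℤ) (m : Fin d → ℤ)
    (ξ : EuclideanSpace ℝ (Fin d)) :
    ‖chip d p f (r n') j k m ξ‖ ≤ ‖chip d p f (r n) j' k m ξ‖ := by
  simp only [chip_eq_indicator, remainder_eq_indicator hr0 hrec, indicator_indicator]
  refine norm_indicator_le_of_subset (inter_subset_inter (chipSet_mono k m hj) ?_) _ _
  exact biInter_subset_biInter_left fun l hl ↦ lt_of_lt_of_le hl hn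

end Chips

theorem chip_extraction_mass_decay
    (d : ℕ) (p : ℝ) (hp : 1 ≤ p)
    (f : EuclideanSpace ℝ (Fin d) → ℂ)
    (hnorm : eLpNorm f (ENNReal.ofReal p) volume = 1)
    (r : ℕ → EuclideanSpace ℝ (Fin d) → ℂ) (kc : ℕ → ℤ) (mc : ℕ → Fin d → ℤ)
    (hr0 : r 0 = f)
    (hrec : ∀ j : ℕ,
      r (j + 1) = fun ξ => r j ξ - chip d p f (r j) (j + 1) (kc (j + 1)) (mc (j + 1)) ξ)
    (hmax : ∀ j : ℕ, ∀ (k : ℤ) (m : Fin d → ℤ),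
      eLpNorm (chip d p f (r j) (j + 1) k m) (ENNReal.ofReal p) volume ≤
        eLpNorm (chip d p f (r j) (j + 1) (kc (j + 1)) (mc (j + 1)))
          (ENNReal.ofReal p) volume) :
    ∀ j : ℕ, 1 ≤ j → ∀ (k : ℤ) (m : Fin d → ℤ),
      eLpNorm (chip d p f (r (2 * j)) j k m) (ENNReal.ofReal p) volume ≤
        ENNReal.ofReal ((j : ℝ) ^ (-(1 / p))) := by
  intro j hj k m
  have hp0 : 0 < p := zero_lt_one.trans_le hp
  set q := ENNReal.ofReal p
  set A := eLpNorm (chip d p f (r (2 * j)) j k m) q volume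
  have hA : ∀ i ∈ Finset.Ico j (2 * j),
      A ≤ eLpNorm (chip d p f (r i) (i + 1) (kc (i + 1)) (mc (i + 1))) q volume := by
    intro i hi
    rw [Finset.mem_Ico] at hi
    exact (eLpNorm_mono (norm_chip_remainder_le hr0 hrec (by omega) (by omega) k m)).trans
      (hmax i k m)
  have hsum : ∑ i ∈ Finset.Ico j (2 * j),
      eLpNorm (chip d p f (r i) (i + 1) (kc (i + 1)) (mc (i + 1))) q volume ^ p ≤ 1 := by
    have := sum_eLpNorm_indicator_rpow_le (p := p.toNNReal) (μ := volume) (by simpa using hp0) f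
      _ ((disjoint_disjointed (extractedSet d p f kc mc)).set_pairwise (Finset.Ico j (2 * j)))
    have hq : (p.toNNReal : ℝ≥0∞) = q := rfl
    simpa only [← extracted_chip_eq_indicator_disjointed hr0 hrec, Real.coe_toNNReal p hp0.le,
      hq, hnorm, ENNReal.one_rpow] using this
  refine ENNReal.le_ofReal_rpow_neg_inv_of_mul_rpow_le_one hp0 (by omega) ?_
  calc (j : ℝ≥0∞) * A ^ p = (Finset.Ico j (2 * j)).card • A ^ p := by
        rw [Nat.card_Ico, nsmul_eq_mul, two_mul, Nat.add_sub_cancel]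
    _ ≤ _ := Finset.card_nsmul_le_sum _ _ _ fun i hi ↦ ENNReal.rpow_le_rpow (hA i hi) hp0.le
    _ ≤ 1 := hsum
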